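/- If α ≠ 0 and 0 ≤ j ≤ |I_α|, then L_n^α(m,j) is an indecomposable U(gl(n))-module: it cannot be written as a direct sum of two nonzero submodules. Indeed, every nonzero submodule contains the simple module V_n^α(m,∅). -/

import Mathlib

/-!
The diagonal operators `E_{aa}` act on `x^k` by the scalars `k_a + α_a`, which separate
distinct monomials, so every `𝔤𝔩(n)`-submodule contains all monomials occurring in its elements.
Fix `ℓ₀` with `α_{ℓ₀} ≠ 0`. Since `0 ≤ Re α < 1`, the coefficient `k_b + α_b` vanishes only when
`α_b = 0` and `k_b = 0`; hence `E_{b ℓ₀}` always moves `x^k` to `x^{k + e_b - e_{ℓ₀}}`, and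
`E_{ℓ₀ b}` moves it to `x^{k - e_b + e_{ℓ₀}}` unless `α_b = k_b = 0`. Adjusting the coordinates
`b ≠ ℓ₀` one unit at a time, any monomial of degree `m` reaches any monomial of degree `m` that is
nonnegative on `I_α`, i.e. every basis vector of `V_n^α(m,∅)`. Two nonzero submodules then meet
in `V_n^α(m,∅) ≠ 0`.
-/

open Finsupp

/-- The space of Laurent polynomials `L_n = ℂ[x₁^{±1},...,xₙ^{±1}]`,
realized as finitely supported functions from exponent vectors to ℂ.
The monomial `x^k` is `Finsupp.single k 1`. -/
abbrev Lmon (n : ℕ) : Type := (Fin n → ℤ) →₀ ℂ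

/-- The α-twisted action of the matrix unit `E_{ab}` on `L_n`:
`E_{ab} · x^k = (k_b + α_b) x^{k + e_a - e_b}`. -/
noncomputable def Eab {n : ℕ} (α : Fin n → ℂ) (a b : Fin n) :
    Lmon n →ₗ[ℂ] Lmon n :=
  Finsupp.lsum ℂ (fun k => ((k b : ℂ) + α b) •
    Finsupp.lsingle (fun i => k i + (if i = a then 1 else 0) - (if i = b then 1 else 0)))

open scoped Classical in
/-- `V_n^α(m, J)`: the span of monomials `x^k` of total degree `m` such that
`{ℓ ∈ I_α : k_ℓ < 0} ⊆ J`, where `I_α = {ℓ : α_ℓ = 0}`. -/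
noncomputable def Vmod {n : ℕ} (α : Fin n → ℂ) (m : ℤ) (J : Finset (Fin n)) :
    Submodule ℂ (Lmon n) :=
  Submodule.span ℂ {f | ∃ k : Fin n → ℤ, f = Finsupp.single k (1 : ℂ) ∧
    (∑ i, k i) = m ∧ ∀ ℓ, α ℓ = 0 → k ℓ < 0 → ℓ ∈ J}

open scoped Classical in
/-- `L_n^α(m, j)`: the span of monomials `x^k` of total degree `m` with
`|{ℓ ∈ I_α : k_ℓ < 0}| ≤ j`  (the index `j` is an integer so that `j = -1`
gives the zero module). -/
noncomputable def LmodJ {n : ℕ} (α : Fin n → ℂ) (m j : ℤ) : Submodule ℂ (Lmon n) :=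
  Submodule.span ℂ {f | ∃ k : Fin n → ℤ, f = Finsupp.single k (1 : ℂ) ∧
    (∑ i, k i) = m ∧
    ((Finset.univ.filter (fun ℓ => α ℓ = 0 ∧ k ℓ < 0)).card : ℤ) ≤ j}

/-- A subspace of `L_n` is a `𝔤𝔩(n)`-submodule (equivalently a `U(𝔤𝔩(n))`-submodule)
iff it is invariant under all the operators `E_{ab}`. -/
def glInv {n : ℕ} (α : Fin n → ℂ) (p : Submodule ℂ (Lmon n)) : Prop :=
  ∀ a b : Fin n, ∀ f ∈ p, Eab α a b f ∈ p

/-- The `U(𝔤𝔩(n))`-submodule of `L_n^α` generated by `f`: the smallest subspace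
containing `f` that is invariant under all `E_{ab}`. -/
noncomputable def genMod {n : ℕ} (α : Fin n → ℂ) (f : Lmon n) : Submodule ℂ (Lmon n) :=
  sInf {p | f ∈ p ∧ glInv α p}

section

variable {n : ℕ}

def shiftExp (k : Fin n → ℤ) (a b : Fin n) : Fin n → ℤ :=
  fun i => k i + (if i = a then 1 else 0) - (if i = b then 1 else 0)

lemma shiftExp_self (k : Fin n → ℤ) (a : Fin n) : shiftExp k a a = k := by
  funext i; simp [shiftExp]

lemma shiftExp_apply_of_ne {k : Fin n → ℤ} {a b i : Fin n} (ha : i ≠ a) (hb : i ≠ b) :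
    shiftExp k a b i = k i := by
  simp [shiftExp, ha, hb]

lemma shiftExp_apply_left {k : Fin n → ℤ} {a b : Fin n} (h : a ≠ b) :
    shiftExp k a b a = k a + 1 := by
  simp [shiftExp, h]

lemma shiftExp_apply_right {k : Fin n → ℤ} {a b : Fin n} (h : a ≠ b) :
    shiftExp k a b b = k b - 1 := by
  simp [shiftExp, h.symm]

lemma sum_shiftExp (k : Fin n → ℤ) (a b : Fin n) : ∑ i, shiftExp k a b i = ∑ i, k i := by
  simp [shiftExp, Finset.sum_add_distrib, Finset.sum_sub_distrib, Finset.sum_ite_eq']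

lemma Eab_single (α : Fin n → ℂ) (a b : Fin n) (k : Fin n → ℤ) (c : ℂ) :
    Eab α a b (single k c) = ((k b : ℂ) + α b) • single (shiftExp k a b) c := by
  simp only [Eab, lsum_single, LinearMap.smul_apply, lsingle_apply]
  rfl

lemma Eab_self_apply (α : Fin n → ℂ) (a : Fin n) (f : Lmon n) (q : Fin n → ℤ) :
    Eab α a a f q = ((q a : ℂ) + α a) * f q := by
  induction f using Finsupp.induction_linear with
  | zero => simp
  | add f g hf hg => simp only [map_add, Finsupp.add_apply, hf, hg]; ring
  | single k c =>
    rw [Eab_single, shiftExp_self, Finsupp.smul_apply, smul_eq_mul, single_apply]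
    split_ifs with h
    · rw [h]
    · ring

lemma intCast_add_ne_zero {β : ℂ} (h0 : 0 ≤ β.re) (h1 : β.re < 1) {z : ℤ}
    (h : β = 0 → z ≠ 0) : (z : ℂ) + β ≠ 0 := by
  intro hzβ
  have hβ : β = -z := eq_neg_of_add_eq_zero_right hzβ
  have hre : β.re = -z := by simp [hβ]
  have hz : z = 0 := by
    rw [hre] at h0 h1
    have : (0 : ℤ) ≤ -z := by exact_mod_cast h0
    have : -z < (1 : ℤ) := by exact_mod_cast h1
    omega
  exact h (by simp [hβ, hz]) hz

section Submodule

variable {α : Fin n → ℂ} {p : Submodule ℂ (Lmon n)}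

lemma single_mem_of_mem_support (hp : glInv α p) {f : Lmon n} (hf : f ∈ p) {k : Fin n → ℤ}
    (hk : k ∈ f.support) : single k 1 ∈ p := by
  induction hN : f.support.card using Nat.strong_induction_on generalizing f with
  | _ N ih =>
  by_cases hs : f.support = {k}
  · obtain ⟨hfk, hf_eq⟩ := support_eq_singleton.1 hs
    have : (f k)⁻¹ • f = single k 1 := by
      rw [hf_eq]
      simp [hfk]
    exact this ▸ p.smul_mem _ hf
  obtain ⟨k', hk', hk'k⟩ : ∃ k' ∈ f.support, k' ≠ k := by
    by_contra! h
    exact hs (Finset.eq_singleton_iff_unique_mem.2 ⟨hk, h⟩)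
  obtain ⟨a, ha⟩ := Function.ne_iff.1 hk'k
  -- `E_{aa} - (k'_a + α_a)` kills `x^{k'}` and rescales `x^k` by `k_a - k'_a ≠ 0`.
  set g : Lmon n := Eab α a a f - ((k' a : ℂ) + α a) • f
  have hg : ∀ q, g q = ((q a : ℂ) - k' a) * f q := fun q => by
    simp only [g, Finsupp.sub_apply, Finsupp.smul_apply, Eab_self_apply, smul_eq_mul]; ring
  have hgp : g ∈ p := p.sub_mem (hp a a f hf) (p.smul_mem _ hf)
  have hsupp : g.support ⊆ f.support.erase k' := fun q hq => by
    rw [mem_support_iff, hg] at hq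
    refine Finset.mem_erase.2 ⟨?_, mem_support_iff.2 (right_ne_zero_of_mul hq)⟩
    rintro rfl
    simp at hq
  have hkg : k ∈ g.support := by
    rw [mem_support_iff, hg]
    refine mul_ne_zero (sub_ne_zero.2 ?_) (mem_support_iff.1 hk)
    exact_mod_cast Ne.symm ha
  refine ih _ ?_ hgp hkg rfl
  calc g.support.card ≤ (f.support.erase k').card := Finset.card_le_card hsupp
    _ < N := hN ▸ Finset.card_erase_lt_of_mem hk'

lemma single_shiftExp_mem (hα : ∀ ℓ, 0 ≤ (α ℓ).re ∧ (α ℓ).re < 1) (hp : glInv α p)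
    {k : Fin n → ℤ} (hk : single k 1 ∈ p) (a b : Fin n) (hb : α b = 0 → k b ≠ 0) :
    single (shiftExp k a b) 1 ∈ p := by
  have hc : (k b : ℂ) + α b ≠ 0 := intCast_add_ne_zero (hα b).1 (hα b).2 hb
  have h := p.smul_mem ((k b : ℂ) + α b)⁻¹ (hp a b _ hk)
  rwa [Eab_single, smul_smul, inv_mul_cancel₀ hc, one_smul] at h

lemma eq_of_sum_eq_of_eqOn_ne {k k' : Fin n → ℤ} (ℓ₀ : Fin n) (hsum : ∑ i, k i = ∑ i, k' i)
    (h : ∀ i, i ≠ ℓ₀ → k i = k' i) : k = k' := by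
  have hrest : ∑ i ∈ Finset.univ.erase ℓ₀, k i = ∑ i ∈ Finset.univ.erase ℓ₀, k' i :=
    Finset.sum_congr rfl fun i hi => h i (Finset.ne_of_mem_erase hi)
  have hℓ₀ : k ℓ₀ = k' ℓ₀ := by
    rw [← Finset.add_sum_erase _ _ (Finset.mem_univ ℓ₀),
      ← Finset.add_sum_erase _ _ (Finset.mem_univ ℓ₀), hrest] at hsum
    exact add_right_cancel hsum
  funext i
  by_cases hi : i = ℓ₀
  · exact hi ▸ hℓ₀
  · exact h i hi

lemma sum_erase_natAbs_sub_lt {k k₁ k' : Fin n → ℤ} {ℓ₀ b : Fin n} (hb : b ≠ ℓ₀)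
    (hagree : ∀ i, i ≠ b → i ≠ ℓ₀ → k₁ i = k i)
    (hlt : (k₁ b - k' b).natAbs < (k b - k' b).natAbs) :
    ∑ i ∈ Finset.univ.erase ℓ₀, (k₁ i - k' i).natAbs
      < ∑ i ∈ Finset.univ.erase ℓ₀, (k i - k' i).natAbs := by
  refine Finset.sum_lt_sum (fun i hi => ?_) ⟨b, Finset.mem_erase.2 ⟨hb, Finset.mem_univ b⟩, hlt⟩
  by_cases hib : i = b
  · exact hib ▸ hlt.le
  · rw [hagree i hib (Finset.ne_of_mem_erase hi)]

lemma single_mem_of_sum_eq (hα : ∀ ℓ, 0 ≤ (α ℓ).re ∧ (α ℓ).re < 1) {ℓ₀ : Fin n}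
    (hℓ₀ : α ℓ₀ ≠ 0) (hp : glInv α p) {k k' : Fin n → ℤ} (hk : single k 1 ∈ p)
    (hsum : ∑ i, k i = ∑ i, k' i) (hk' : ∀ ℓ, α ℓ = 0 → 0 ≤ k' ℓ) : single k' 1 ∈ p := by
  -- induction on the `ℓ¹`-distance from `k` to `k'` in the coordinates other than `ℓ₀`
  induction hN : ∑ i ∈ Finset.univ.erase ℓ₀, (k i - k' i).natAbs
    using Nat.strong_induction_on generalizing k with
  | _ N ih =>
  by_cases hall : ∀ i, i ≠ ℓ₀ → k i = k' i
  · rwa [← eq_of_sum_eq_of_eqOn_ne ℓ₀ hsum hall]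
  obtain ⟨b, hb, hkb⟩ : ∃ b, b ≠ ℓ₀ ∧ k b ≠ k' b := by simpa using hall
  rcases lt_or_gt_of_ne hkb with hlt | hgt
  · have hmem := single_shiftExp_mem hα hp hk b ℓ₀ fun h => absurd h hℓ₀
    refine ih _ ?_ hmem ((sum_shiftExp k b ℓ₀).trans hsum) rfl
    refine hN ▸ sum_erase_natAbs_sub_lt hb (fun i hib hiℓ₀ => shiftExp_apply_of_ne hib hiℓ₀) ?_
    rw [shiftExp_apply_left hb]
    omega
  · have hmem := single_shiftExp_mem hα hp hk ℓ₀ b fun h => by have := hk' b h; omega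
    refine ih _ ?_ hmem ((sum_shiftExp k ℓ₀ b).trans hsum) rfl
    refine hN ▸ sum_erase_natAbs_sub_lt hb (fun i hib hiℓ₀ => shiftExp_apply_of_ne hiℓ₀ hib) ?_
    rw [shiftExp_apply_right hb.symm]
    omega

lemma LmodJ_le_supported (α : Fin n → ℂ) (m j : ℤ) :
    LmodJ α m j ≤ supported ℂ ℂ {k | ∑ i, k i = m} := by
  rw [LmodJ, Submodule.span_le]
  rintro _ ⟨k, rfl, hk, -⟩
  exact single_mem_supported ℂ _ hk

lemma Vmod_empty_le (hα : ∀ ℓ, 0 ≤ (α ℓ).re ∧ (α ℓ).re < 1) (hα0 : α ≠ 0) {m j : ℤ}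
    (hp : glInv α p) (hpL : p ≤ LmodJ α m j) (hp0 : p ≠ ⊥) : Vmod α m ∅ ≤ p := by
  obtain ⟨ℓ₀, hℓ₀⟩ := Function.ne_iff.1 hα0
  obtain ⟨f, hf, hf0⟩ := Submodule.exists_mem_ne_zero_of_ne_bot hp0
  obtain ⟨k, hk⟩ := support_nonempty_iff.2 hf0
  have hdeg : ∑ i, k i = m := (mem_supported ℂ f).1 (LmodJ_le_supported α m j (hpL hf)) hk
  rw [Vmod, Submodule.span_le]
  rintro _ ⟨k', rfl, hsum, hneg⟩
  refine single_mem_of_sum_eq hα hℓ₀ hp (single_mem_of_mem_support hp hf hk)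
    (hdeg.trans hsum.symm) fun ℓ hℓ => ?_
  by_contra! h
  exact Finset.notMem_empty ℓ (hneg ℓ hℓ h)

end Submodule

lemma Vmod_empty_ne_bot {α : Fin n → ℂ} (hα0 : α ≠ 0) (m : ℤ) : Vmod α m ∅ ≠ ⊥ := by
  obtain ⟨ℓ₀, hℓ₀⟩ := Function.ne_iff.1 hα0
  have hmem : single (Pi.single ℓ₀ m) (1 : ℂ) ∈ Vmod α m ∅ := by
    refine Submodule.subset_span ⟨_, rfl, by simp, fun ℓ hℓ hneg => ?_⟩
    have hne : ℓ ≠ ℓ₀ := fun h => hℓ₀ (h ▸ hℓ)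
    simp [hne] at hneg
  exact Submodule.ne_bot_iff _ |>.2 ⟨_, hmem, single_ne_zero.2 one_ne_zero⟩

end

open scoped Classical in
theorem stmt_15_general (n : ℕ) (α : Fin n → ℂ)
    (hα : ∀ ℓ, 0 ≤ (α ℓ).re ∧ (α ℓ).re < 1) (hα0 : α ≠ 0)
    (m : ℤ) (j : ℕ) :
    (∀ p : Submodule ℂ (Lmon n), glInv α p → p ≤ LmodJ α m j → p ≠ ⊥ →
      Vmod α m ∅ ≤ p) ∧
    (∀ M N : Submodule ℂ (Lmon n), glInv α M → glInv α N →
      M ⊔ N = LmodJ α m j → M ⊓ N = ⊥ → M = ⊥ ∨ N = ⊥) := by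
  refine ⟨fun p hp hpL hp0 => Vmod_empty_le hα hα0 hp hpL hp0, ?_⟩
  intro M N hM hN hsup hinf
  by_contra! h
  have hVM := Vmod_empty_le hα hα0 hM (hsup ▸ le_sup_left) h.1
  have hVN := Vmod_empty_le hα hα0 hN (hsup ▸ le_sup_right) h.2
  exact Vmod_empty_ne_bot hα0 m (eq_bot_iff.2 (hinf ▸ le_inf hVM hVN))

open scoped Classical in
/-- For `α ≠ 0` and `0 ≤ j ≤ |I_α|`, every nonzero `𝔤𝔩(n)`-submodule of
`L_n^α(m,j)` contains the simple module `V_n^α(m,∅)`; consequently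
`L_n^α(m,j)` is indecomposable. -/
theorem stmt_15 (n : ℕ) (α : Fin n → ℂ)
    (hα : ∀ ℓ, 0 ≤ (α ℓ).re ∧ (α ℓ).re < 1) (hα0 : α ≠ 0)
    (m : ℤ) (j : ℕ)
    (hj : j ≤ (Finset.univ.filter (fun ℓ : Fin n => α ℓ = 0)).card) :
    (∀ p : Submodule ℂ (Lmon n), glInv α p → p ≤ LmodJ α m j → p ≠ ⊥ →
      Vmod α m ∅ ≤ p) ∧
    (∀ M N : Submodule ℂ (Lmon n), glInv α M → glInv α N →
      M ⊔ N = LmodJ α m j → M ⊓ N = ⊥ → M = ⊥ ∨ N = ⊥) :=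
  stmt_15_general n α hα hα0 m j
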